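/- Let a closed Riemannian manifold (M,g) admit two orthogonal unit vector fields ξ₁ and ξ₂; put D_i = span(ξ_i) (i = 1,2) and D3 = D1^⊥ ∩ D2^⊥. If ξ₁ and ξ₂ are geodesic vector fields, the pair (D1,D2) is mixed totally geodesic, and the pairs (D1,D3) and (D2,D3) are mixed integrable, then either the sectional curvature satisfies K(ξ₁(x),ξ₂(x)) < 0 at some point x ∈ M, or K(ξ₁,ξ₂) ≡ 0 on M and h̃₁|_{D2×D3} = 0, h̃₂|_{D1×D3} = 0, T̃₃|_{D1×D2} = 0 on all of M. -/

import Mathlib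

open scoped BigOperators
noncomputable section

/-- An abstract model of the ℝ-module of smooth vector fields on a manifold `M`,
together with multiplication by smooth functions, the Lie bracket and the
directional derivative of smooth functions along vector fields. -/
structure SmoothVF (M : Type) where
  /-- the space of smooth vector fields -/
  VF : Type
  [vfAdd : AddCommGroup VF]
  [vfMod : Module ℝ VF]
  /-- multiplication of a vector field by a smooth function -/
  fsmul : (M → ℝ) → VF → VF
  /-- Lie bracket of vector fields -/
  bracket : VF → VF → VF
  /-- directional derivative of a smooth function along a vector field -/
  dd : VF → (M → ℝ) → (M → ℝ)
  fsmul_one : ∀ X : VF, fsmul 1 X = X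
  fsmul_mul : ∀ (f₁ f₂ : M → ℝ) (X : VF), fsmul (f₁ * f₂) X = fsmul f₁ (fsmul f₂ X)
  fsmul_add : ∀ (f : M → ℝ) (X Y : VF), fsmul f (X + Y) = fsmul f X + fsmul f Y
  add_fsmul : ∀ (f₁ f₂ : M → ℝ) (X : VF), fsmul (f₁ + f₂) X = fsmul f₁ X + fsmul f₂ X
  fsmul_const : ∀ (r : ℝ) (X : VF), fsmul (fun _ => r) X = r • X
  bracket_skew : ∀ X Y : VF, bracket X Y = - bracket Y X
  bracket_add_left : ∀ X Y Z : VF, bracket (X + Y) Z = bracket X Z + bracket Y Z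
  dd_add : ∀ (X : VF) (f₁ f₂ : M → ℝ), dd X (f₁ + f₂) = dd X f₁ + dd X f₂
  dd_mul : ∀ (X : VF) (f₁ f₂ : M → ℝ), dd X (f₁ * f₂) = f₁ * dd X f₂ + f₂ * dd X f₁
  dd_add_left : ∀ (X Y : VF) (f : M → ℝ), dd (X + Y) f = dd X f + dd Y f
  dd_fsmul : ∀ (h : M → ℝ) (X : VF) (f : M → ℝ), dd (fsmul h X) f = h * dd X f
  dd_bracket : ∀ (X Y : VF) (f : M → ℝ), dd (bracket X Y) f = dd X (dd Y f) - dd Y (dd X f)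

attribute [instance] SmoothVF.vfAdd SmoothVF.vfMod

/-- A Riemannian metric on the abstract space of vector fields, together with
its Levi-Civita connection (torsion-free and metric-compatible). -/
structure RMetric {M : Type} (V : SmoothVF M) where
  /-- the metric tensor -/
  g : V.VF → V.VF → (M → ℝ)
  /-- the Levi-Civita connection -/
  nabla : V.VF → V.VF → V.VF
  g_symm : ∀ X Y, g X Y = g Y X
  g_add_left : ∀ X Y Z, g (X + Y) Z = g X Z + g Y Z
  g_fsmul_left : ∀ f X Y, g (V.fsmul f X) Y = f * g X Y
  g_nonneg : ∀ X x, 0 ≤ g X X x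
  g_definite : ∀ X, g X X = 0 → X = 0
  nabla_add_left : ∀ X Y Z, nabla (X + Y) Z = nabla X Z + nabla Y Z
  nabla_add_right : ∀ X Y Z, nabla X (Y + Z) = nabla X Y + nabla X Z
  nabla_fsmul_left : ∀ f X Y, nabla (V.fsmul f X) Y = V.fsmul f (nabla X Y)
  nabla_leibniz : ∀ f X Y, nabla X (V.fsmul f Y) = V.fsmul (V.dd X f) Y + V.fsmul f (nabla X Y)
  torsion_free : ∀ X Y, nabla X Y - nabla Y X = V.bracket X Y
  metric_compat : ∀ X Y Z, V.dd X (g Y Z) = g (nabla X Y) Z + g Y (nabla X Z)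

namespace RMetric

variable {M : Type} {V : SmoothVF M} (gm : RMetric V)

/-- The Riemann curvature tensor `R(X,Y)Z = ∇_X∇_Y Z − ∇_Y∇_X Z − ∇_{[X,Y]}Z`. -/
def Rc (X Y Z : V.VF) : V.VF :=
  gm.nabla X (gm.nabla Y Z) - gm.nabla Y (gm.nabla X Z) - gm.nabla (V.bracket X Y) Z

end RMetric

/-- Three pairwise orthogonal distributions `D₁, D₂, D₃` (indices `0, 1, 2`)
decomposing the tangent bundle, described by their orthoprojectors. -/
structure Split3 {M : Type} {V : SmoothVF M} (gm : RMetric V) where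
  /-- the orthoprojector onto the `i`-th distribution -/
  P : Fin 3 → V.VF → V.VF
  P_add : ∀ i X Y, P i (X + Y) = P i X + P i Y
  P_fsmul : ∀ i f X, P i (V.fsmul f X) = V.fsmul f (P i X)
  P_idem : ∀ i X, P i (P i X) = P i X
  P_orth : ∀ i j X, i ≠ j → P i (P j X) = 0
  P_sum : ∀ X, P 0 X + P 1 X + P 2 X = X
  P_selfadj : ∀ i X Y, gm.g (P i X) Y = gm.g X (P i Y)

namespace Split3

variable {M : Type} {V : SmoothVF M} {gm : RMetric V} (s : Split3 gm)

/-- Orthoprojector onto the orthogonal complement of `D_i`. -/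
def Pp (i : Fin 3) (X : V.VF) : V.VF := X - s.P i X

/-- The second fundamental form `h_i` of the distribution `D_i`. -/
def h (i : Fin 3) (X Y : V.VF) : V.VF :=
  (1 / 2 : ℝ) • s.Pp i (gm.nabla (s.P i X) (s.P i Y) + gm.nabla (s.P i Y) (s.P i X))

/-- The integrability tensor `T_i` of the distribution `D_i`. -/
def T (i : Fin 3) (X Y : V.VF) : V.VF :=
  (1 / 2 : ℝ) • s.Pp i (gm.nabla (s.P i X) (s.P i Y) - gm.nabla (s.P i Y) (s.P i X))

/-- The second fundamental form `h̃_i` of `D_i^⊥`. -/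
def ht (i : Fin 3) (X Y : V.VF) : V.VF :=
  (1 / 2 : ℝ) • s.P i (gm.nabla (s.Pp i X) (s.Pp i Y) + gm.nabla (s.Pp i Y) (s.Pp i X))

/-- The integrability tensor `T̃_i` of `D_i^⊥`. -/
def Tt (i : Fin 3) (X Y : V.VF) : V.VF :=
  (1 / 2 : ℝ) • s.P i (gm.nabla (s.Pp i X) (s.Pp i Y) - gm.nabla (s.Pp i Y) (s.Pp i X))

/-- The mixed second fundamental form `𝔥_{ij}(X,Y) = h̃_k(P_iX,P_jY) + h̃_k(P_jX,P_iY)`,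
where `k` is the remaining index. -/
def mh (k i j : Fin 3) (X Y : V.VF) : V.VF :=
  s.ht k (s.P i X) (s.P j Y) + s.ht k (s.P j X) (s.P i Y)

/-- The mixed integrability tensor `𝔗_{ij}(X,Y) = T̃_k(P_iX,P_jY) + T̃_k(P_jX,P_iY)`,
where `k` is the remaining index. -/
def mT (k i j : Fin 3) (X Y : V.VF) : V.VF :=
  s.Tt k (s.P i X) (s.P j Y) + s.Tt k (s.P j X) (s.P i Y)

/-- Orthoprojector onto `D₁ ⊕ D₂`. -/
def P12 (X : V.VF) : V.VF := s.P 0 X + s.P 1 X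

/-- Second fundamental form of `D₁ ⊕ D₂`. -/
def h12 (X Y : V.VF) : V.VF :=
  (1 / 2 : ℝ) • s.P 2 (gm.nabla (s.P12 X) (s.P12 Y) + gm.nabla (s.P12 Y) (s.P12 X))

/-- Integrability tensor of `D₁ ⊕ D₂`. -/
def T12 (X Y : V.VF) : V.VF :=
  (1 / 2 : ℝ) • s.P 2 (gm.nabla (s.P12 X) (s.P12 Y) - gm.nabla (s.P12 Y) (s.P12 X))

/-- Integrability tensor of `(D₁ ⊕ D₂)^⊥ = D₃`'s complement pair, i.e. `T̃` of `D₁⊕D₂`. -/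
def Tt12 (X Y : V.VF) : V.VF :=
  (1 / 2 : ℝ) • s.P12 (gm.nabla (s.P 2 X) (s.P 2 Y) - gm.nabla (s.P 2 Y) (s.P 2 X))

/-- The connection `∇^P_X Y = P ∇_X (P Y)` induced on `D = D₁ ⊕ D₂`. -/
def nablaP (X Y : V.VF) : V.VF := s.P12 (gm.nabla X (s.P12 Y))

/-- The curvature tensor of the induced connection `∇^P`. -/
def RP (X Y Z : V.VF) : V.VF :=
  s.nablaP X (s.nablaP Y Z) - s.nablaP Y (s.nablaP X Z) - s.nablaP (V.bracket X Y) Z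

end Split3

/-- A full Riemannian package on `M`: a metric with its Levi-Civita connection,
three pairwise orthogonal distributions decomposing the tangent bundle,
global orthonormal frames adapted to the distributions, and a volume density. -/
structure Pkg {M : Type} (V : SmoothVF M) where
  /-- the Riemannian metric with its Levi-Civita connection -/
  gm : RMetric V
  /-- the orthoprojectors onto the three distributions -/
  sp : Split3 gm
  /-- index types for the adapted orthonormal frames -/
  ι : Fin 3 → Type
  fint : ∀ i, Fintype (ι i)
  deq : ∀ i, DecidableEq (ι i)
  /-- an orthonormal frame of the `i`-th distribution -/
  E : ∀ i, ι i → V.VF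
  E_mem : ∀ i a, sp.P i (E i a) = E i a
  E_ortho : ∀ i a b, gm.g (E i a) (E i b) = fun _ => @ite ℝ (a = b) (deq i a b) 1 0
  E_span : ∀ i X, sp.P i X = ∑ a ∈ (fint i).elems, V.fsmul (gm.g X (E i a)) (E i a)
  /-- the volume density of the metric (with respect to a reference integral) -/
  dvol : M → ℝ
  dvol_pos : ∀ x, 0 < dvol x

attribute [instance] Pkg.fint Pkg.deq

namespace Pkg

variable {M : Type} {V : SmoothVF M} (p : Pkg V)

/-- Index type of the full adapted orthonormal frame. -/
def idx : Type := Σ i : Fin 3, p.ι i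

instance : Fintype p.idx := inferInstanceAs (Fintype (Σ i : Fin 3, p.ι i))

/-- The full adapted orthonormal frame. -/
def xF (k : p.idx) : V.VF := p.E k.1 k.2

/-- The mean curvature vector `H_i = tr_g h_i` of `D_i`. -/
def H (i : Fin 3) : V.VF := ∑ a : p.ι i, p.sp.h i (p.E i a) (p.E i a)

/-- Divergence of a vector field. -/
def Div (Y : V.VF) : M → ℝ := ∑ k : p.idx, p.gm.g (p.gm.nabla (p.xF k) Y) (p.xF k)

/-- Divergence of a `(1,2)`-tensor field. -/
def DivT (S : V.VF → V.VF → V.VF) (X Y : V.VF) : M → ℝ :=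
  ∑ k : p.idx,
    p.gm.g (p.gm.nabla (p.xF k) (S X Y) - S (p.gm.nabla (p.xF k) X) Y
              - S X (p.gm.nabla (p.xF k) Y)) (p.xF k)

/-- Divergence of a `(1,1)`-tensor field, as a 1-form. -/
def DivOp (S : V.VF → V.VF) (X : V.VF) : M → ℝ :=
  ∑ k : p.idx, p.gm.g (p.gm.nabla (p.xF k) (S X) - S (p.gm.nabla (p.xF k) X)) (p.xF k)

/-- The mutual curvature of the distributions `D_i` and `D_j`. -/
def Smix (i j : Fin 3) : M → ℝ :=
  ∑ a : p.ι i, ∑ b : p.ι j, p.gm.g (p.gm.Rc (p.E i a) (p.E j b) (p.E j b)) (p.E i a)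

/-- The mutual curvature `S_{D₁,D₂}`. -/
def Smut : M → ℝ := p.Smix 0 1

/-- The mixed scalar `P`-curvature `S^P_mix(D₁,D₂)` of the induced connection on `D₁ ⊕ D₂`. -/
def SPmix : M → ℝ :=
  ∑ a : p.ι 0, ∑ b : p.ι 1, p.gm.g (p.sp.RP (p.E 0 a) (p.E 1 b) (p.E 1 b)) (p.E 0 a)

/-- Squared norm of a `(1,2)`-tensor restricted to `D_i × D_j`. -/
def normRes (S : V.VF → V.VF → V.VF) (i j : Fin 3) : M → ℝ :=
  ∑ a : p.ι i, ∑ b : p.ι j, p.gm.g (S (p.E i a) (p.E j b)) (S (p.E i a) (p.E j b))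

/-- Squared norm of a `(1,2)`-tensor. -/
def normT (S : V.VF → V.VF → V.VF) : M → ℝ :=
  ∑ k : p.idx, ∑ l : p.idx, p.gm.g (S (p.xF k) (p.xF l)) (S (p.xF k) (p.xF l))

/-- The gradient of a smooth function. -/
def grad (f : M → ℝ) : V.VF := ∑ k : p.idx, V.fsmul (V.dd (p.xF k) f) (p.xF k)

/-- The shape operator `A_{i,Z}` of `D_i`, `g(A_{i,Z}X, W) = g(h_i(X,W), Z)`. -/
def Aop (i : Fin 3) (Z X : V.VF) : V.VF :=
  ∑ k : p.idx, V.fsmul (p.gm.g (p.sp.h i X (p.xF k)) Z) (p.xF k)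

/-- The shape operator `A_{12,Z}` of `D₁ ⊕ D₂`. -/
def Aop12 (Z X : V.VF) : V.VF :=
  ∑ k : p.idx, V.fsmul (p.gm.g (p.sp.h12 X (p.xF k)) Z) (p.xF k)

/-- The operator `T̃♯_{i,Z}`, `g(T̃♯_{i,Z}X, W) = g(T̃_i(X,W), Z)`. -/
def Ttop (i : Fin 3) (Z X : V.VF) : V.VF :=
  ∑ k : p.idx, V.fsmul (p.gm.g (p.sp.Tt i X (p.xF k)) Z) (p.xF k)

/-- The operator `T̃♯_{12,Z}` of `D₁ ⊕ D₂`. -/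
def Ttop12 (Z X : V.VF) : V.VF :=
  ∑ k : p.idx, V.fsmul (p.gm.g (p.sp.Tt12 X (p.xF k)) Z) (p.xF k)

/-- The action `J_{D₁,D₂}(g) = ∫ S_{D₁,D₂} dvol_g`, with respect to the
reference integral `I`. -/
def J (I : (M → ℝ) →ₗ[ℝ] ℝ) : ℝ := I (p.Smut * p.dvol)

/-- The modified action `J_{D₁⊂D}(g) = ∫ S_{D₁,D₁^⊥∩D} dvol_g` (here `D₃ = D₁^⊥ ∩ D`). -/
def Jmod (I : (M → ℝ) →ₗ[ℝ] ℝ) : ℝ := I (p.Smix 0 2 * p.dvol)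

/-- The volume `Vol(g) = ∫ dvol_g`. -/
def Vol (I : (M → ℝ) →ₗ[ℝ] ℝ) : ℝ := I p.dvol

end Pkg

/-- Two endomorphisms have the same range (as idempotents: each fixes the
image of the other). -/
def SameRange {A : Type} (Q Q' : A → A) : Prop :=
  (∀ X, Q (Q' X) = Q' X) ∧ (∀ X, Q' (Q X) = Q X)

/-- A smooth 1-parameter variation `g_t` of the Riemannian package `p0`,
with infinitesimal variation tensor `B = ∂ₜ g_t |_{t=0}`. -/
structure Variation {M : Type} {V : SmoothVF M} (p0 : Pkg V) where
  /-- the family of Riemannian packages -/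
  Gt : ℝ → Pkg V
  at0 : Gt 0 = p0
  /-- the infinitesimal variation `B = ∂ₜ g_t |_{t=0}` -/
  B : V.VF → V.VF → (M → ℝ)
  derivB : ∀ X Y x, HasDerivAt (fun t => (Gt t).gm.g X Y x) (B X Y x) 0

namespace Variation

variable {M : Type} {V : SmoothVF M} {p0 : Pkg V} (v : Variation p0)

/-- The variation keeps the distributions `D₁` and `D₂` fixed (and hence
orthogonal); the complement `D₃(t)` may vary. -/
def KeepsD12 : Prop :=
  ∀ t, SameRange ((v.Gt t).sp.P 0) (p0.sp.P 0) ∧ SameRange ((v.Gt t).sp.P 1) (p0.sp.P 1)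

/-- Adapted variation: all three distributions stay fixed and pairwise orthogonal. -/
def Adapted : Prop := ∀ t, ∀ i : Fin 3, SameRange ((v.Gt t).sp.P i) (p0.sp.P i)

/-- Volume-preserving variation. -/
def VolPres (I : (M → ℝ) →ₗ[ℝ] ℝ) : Prop := ∀ t, (v.Gt t).Vol I = p0.Vol I

end Variation

/-!
Put `a = ∇_{ξ₁}ξ₂` and `b = ∇_{ξ₂}ξ₁`. Because `ξ₁, ξ₂` are orthonormal and geodesic, `a` and `b`
are orthogonal to both `ξ₁` and `ξ₂`, i.e. they lie in `D₃`; mixed total geodesicity of `(D₁,D₂)`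
says `P₃(a + b) = 0`, hence `b = -a` and `[ξ₁,ξ₂] = 2a`. Mixed integrability of `(D₂,D₃)` turns
`g(∇_a ξ₂, ξ₁)` into `g(∇_{ξ₂} a, ξ₁) = |a|²`, so `K(ξ₁,ξ₂) = -3|a|²` at every point. Either this
is negative somewhere, or `a = b = 0` everywhere; in the latter case the two mixed integrability
conditions give `g(∇_Z ξ₂, ξ₁) = g(∇_{ξ₂} Z, ξ₁) = 0` (and symmetrically) for `Z ∈ D₃`, which kills
`h̃₁|_{D₂×D₃}` and `h̃₂|_{D₁×D₃}`, while `T̃₃|_{D₁×D₂}` only involves `P₃ a` and `P₃ b`.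
-/

namespace SmoothVF

variable {M : Type} (V : SmoothVF M)

lemma fsmul_zero_left (X : V.VF) : V.fsmul 0 X = 0 :=
  (V.fsmul_const 0 X).trans (zero_smul ℝ X)

lemma fsmul_zero_right (f : M → ℝ) : V.fsmul f 0 = 0 :=
  map_zero (AddMonoidHom.mk' (V.fsmul f) (V.fsmul_add f))

lemma dd_zero (X : V.VF) : V.dd X 0 = 0 :=
  map_zero (AddMonoidHom.mk' (V.dd X) (V.dd_add X))

lemma dd_one (X : V.VF) : V.dd X 1 = 0 := by
  simpa using V.dd_mul X 1 1

end SmoothVF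

namespace RMetric

variable {M : Type} {V : SmoothVF M} (gm : RMetric V)

lemma g_zero_left (Y : V.VF) : gm.g 0 Y = 0 :=
  map_zero (AddMonoidHom.mk' (gm.g · Y) fun X X' => gm.g_add_left X X' Y)

lemma g_zero_right (X : V.VF) : gm.g X 0 = 0 := by
  rw [gm.g_symm, g_zero_left]

lemma g_sub_left (X Y Z : V.VF) : gm.g (X - Y) Z = gm.g X Z - gm.g Y Z :=
  map_sub (AddMonoidHom.mk' (gm.g · Z) fun X X' => gm.g_add_left X X' Z) X Y

lemma g_neg_right (X Y : V.VF) : gm.g X (-Y) = -gm.g X Y := by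
  rw [gm.g_symm, gm.g_symm X]
  exact map_neg (AddMonoidHom.mk' (gm.g · X) fun Y Y' => gm.g_add_left Y Y' X) Y

lemma nabla_zero_left (Y : V.VF) : gm.nabla 0 Y = 0 :=
  map_zero (AddMonoidHom.mk' (gm.nabla · Y) fun X X' => gm.nabla_add_left X X' Y)

lemma nabla_zero_right (X : V.VF) : gm.nabla X 0 = 0 :=
  map_zero (AddMonoidHom.mk' (gm.nabla X) (gm.nabla_add_right X))

lemma eq_zero_of_g_self_nonpos {X : V.VF} (h : ∀ x, gm.g X X x ≤ 0) : X = 0 :=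
  gm.g_definite X (funext fun x => le_antisymm (h x) (gm.g_nonneg X x))

lemma g_nabla_self_eq_zero {ξ : V.VF} (hξ : gm.g ξ ξ = 1) (X : V.VF) :
    gm.g (gm.nabla X ξ) ξ = 0 := by
  have h := gm.metric_compat X ξ ξ
  rw [hξ, V.dd_one, gm.g_symm ξ] at h
  funext x
  have hx := congrFun h x
  simp only [Pi.zero_apply, Pi.add_apply] at hx ⊢
  linarith

lemma g_nabla_eq_neg_of_orthogonal {Y Z : V.VF} (h : gm.g Y Z = 0) (X : V.VF) :
    gm.g (gm.nabla X Y) Z = -gm.g Y (gm.nabla X Z) := by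
  have h' := gm.metric_compat X Y Z
  rw [h, V.dd_zero] at h'
  exact eq_neg_of_add_eq_zero_left h'.symm

lemma g_nabla_geodesic_eq_zero {ξ η : V.VF} (hgeo : gm.nabla ξ ξ = 0) (h : gm.g η ξ = 0) :
    gm.g (gm.nabla ξ η) ξ = 0 := by
  rw [gm.g_nabla_eq_neg_of_orthogonal h, hgeo, gm.g_zero_right, neg_zero]

lemma g_Rc_eq_neg_three_mul {ξ η : V.VF} (hgeo : gm.nabla η η = 0)
    (hswap : gm.nabla η ξ = -gm.nabla ξ η) (horth : gm.g (gm.nabla ξ η) ξ = 0)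
    (hcomm : gm.g (gm.nabla (gm.nabla ξ η) η) ξ = gm.g (gm.nabla η (gm.nabla ξ η)) ξ) :
    gm.g (gm.Rc ξ η η) ξ = -3 * gm.g (gm.nabla ξ η) (gm.nabla ξ η) := by
  set a := gm.nabla ξ η
  have hbracket : V.bracket ξ η = a + a := by
    rw [← gm.torsion_free, hswap, sub_neg_eq_add]
  have hdiff : gm.g (gm.nabla η a) ξ = gm.g a a := by
    rw [gm.g_nabla_eq_neg_of_orthogonal horth, hswap, gm.g_neg_right, neg_neg]
  rw [Rc, hgeo, hbracket, gm.nabla_add_left, gm.g_sub_left, gm.g_sub_left, gm.nabla_zero_right,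
    gm.g_zero_left, gm.g_add_left, hcomm, hdiff]
  ring

end RMetric

namespace Split3

variable {M : Type} {V : SmoothVF M} {gm : RMetric V} (s : Split3 gm)

def IsSpannedByUnit (i : Fin 3) (ξ : V.VF) : Prop :=
  gm.g ξ ξ = 1 ∧ ∀ X, s.P i X = V.fsmul (gm.g X ξ) ξ

lemma P_zero (i : Fin 3) : s.P i 0 = 0 :=
  map_zero (AddMonoidHom.mk' (s.P i) (s.P_add i))

lemma P_sub (i : Fin 3) (X Y : V.VF) : s.P i (X - Y) = s.P i X - s.P i Y :=
  map_sub (AddMonoidHom.mk' (s.P i) (s.P_add i)) X Y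

variable {s}

lemma P_eq_zero_of_mem {i j : Fin 3} (hij : i ≠ j) {X : V.VF} (hX : s.P j X = X) :
    s.P i X = 0 := by
  rw [← hX]
  exact s.P_orth i j X hij

lemma Pp_eq_self_of_mem {i j : Fin 3} (hij : i ≠ j) {X : V.VF} (hX : s.P j X = X) :
    s.Pp i X = X := by
  rw [Pp, P_eq_zero_of_mem hij hX, sub_zero]

lemma g_eq_zero_of_mem {i j : Fin 3} (hij : i ≠ j) {X Y : V.VF} (hX : s.P i X = X)
    (hY : s.P j Y = Y) : gm.g X Y = 0 := by
  rw [← hX, s.P_selfadj, P_eq_zero_of_mem hij hY, gm.g_zero_right]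

lemma P_add_P_add_P {i j k : Fin 3} (hij : i ≠ j) (hik : i ≠ k) (hjk : j ≠ k) (X : V.VF) :
    s.P i X + s.P j X + s.P k X = X := by
  have hi : i ∉ ({j, k} : Finset (Fin 3)) := by simp [hij, hik]
  have huniv : ({i, j, k} : Finset (Fin 3)) = Finset.univ := by
    refine Finset.eq_univ_of_card _ ?_
    rw [Finset.card_insert_of_notMem hi, Finset.card_pair hjk, Fintype.card_fin]
  have hsum := congrArg (∑ l ∈ ·, s.P l X) huniv
  simp only [Finset.sum_insert hi, Finset.sum_pair hjk, Fin.sum_univ_three, s.P_sum] at hsum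
  rwa [add_assoc]

lemma IsSpannedByUnit.mem {i : Fin 3} {ξ : V.VF} (hξ : s.IsSpannedByUnit i ξ) : s.P i ξ = ξ := by
  rw [hξ.2, hξ.1, V.fsmul_one]

lemma IsSpannedByUnit.P_eq_zero {i : Fin 3} {ξ X : V.VF} (hξ : s.IsSpannedByUnit i ξ)
    (hX : gm.g X ξ = 0) : s.P i X = 0 := by
  rw [hξ.2, hX, V.fsmul_zero_left]

lemma ht_of_mem {i j k : Fin 3} (hik : i ≠ k) (hjk : j ≠ k) {X Y : V.VF} (hX : s.P i X = X)
    (hY : s.P j Y = Y) :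
    s.ht k X Y = (1 / 2 : ℝ) • s.P k (gm.nabla X Y + gm.nabla Y X) := by
  rw [ht, Pp_eq_self_of_mem hik.symm hX, Pp_eq_self_of_mem hjk.symm hY]

lemma Tt_of_mem {i j k : Fin 3} (hik : i ≠ k) (hjk : j ≠ k) {X Y : V.VF} (hX : s.P i X = X)
    (hY : s.P j Y = Y) :
    s.Tt k X Y = (1 / 2 : ℝ) • s.P k (gm.nabla X Y - gm.nabla Y X) := by
  rw [Tt, Pp_eq_self_of_mem hik.symm hX, Pp_eq_self_of_mem hjk.symm hY]

variable (s) in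
lemma ht_zero_zero (k : Fin 3) : s.ht k 0 0 = 0 := by
  rw [ht, Pp, s.P_zero, sub_zero, gm.nabla_zero_left, add_zero, s.P_zero, smul_zero]

variable (s) in
lemma Tt_zero_zero (k : Fin 3) : s.Tt k 0 0 = 0 := by
  rw [Tt, Pp, s.P_zero, sub_zero, gm.nabla_zero_left, sub_zero, s.P_zero, smul_zero]

lemma mh_of_mem {i j k : Fin 3} (hij : i ≠ j) {X Y : V.VF} (hX : s.P i X = X)
    (hY : s.P j Y = Y) : s.mh k i j X Y = s.ht k X Y := by
  rw [mh, hX, hY, P_eq_zero_of_mem hij.symm hX, P_eq_zero_of_mem hij hY, ht_zero_zero, add_zero]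

lemma mT_of_mem {i j k : Fin 3} (hij : i ≠ j) {X Y : V.VF} (hX : s.P i X = X)
    (hY : s.P j Y = Y) : s.mT k i j X Y = s.Tt k X Y := by
  rw [mT, hX, hY, P_eq_zero_of_mem hij.symm hX, P_eq_zero_of_mem hij hY, Tt_zero_zero, add_zero]

lemma P_nabla_eq_self_of_geodesic {i j k : Fin 3} (hij : i ≠ j) (hik : i ≠ k) (hjk : j ≠ k)
    {ξ η : V.VF} (hξ : s.IsSpannedByUnit i ξ) (hη : s.IsSpannedByUnit j η)
    (hgeo : gm.nabla ξ ξ = 0) : s.P k (gm.nabla ξ η) = gm.nabla ξ η := by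
  have hi : s.P i (gm.nabla ξ η) = 0 := hξ.P_eq_zero
    (gm.g_nabla_geodesic_eq_zero hgeo (g_eq_zero_of_mem hij.symm hη.mem hξ.mem))
  have hj : s.P j (gm.nabla ξ η) = 0 := hη.P_eq_zero (gm.g_nabla_self_eq_zero hη.1 ξ)
  have hsum := s.P_add_P_add_P hij hik hjk (gm.nabla ξ η)
  rwa [hi, hj, zero_add, zero_add] at hsum

lemma nabla_swap_eq_neg {i j k : Fin 3} (hij : i ≠ j) (hik : i ≠ k) (hjk : j ≠ k)
    (hmh : ∀ X Y, s.mh k i j X Y = 0) {ξ η : V.VF} (hξ : s.IsSpannedByUnit i ξ)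
    (hη : s.IsSpannedByUnit j η) (hgeoξ : gm.nabla ξ ξ = 0) (hgeoη : gm.nabla η η = 0) :
    gm.nabla η ξ = -gm.nabla ξ η := by
  have h := hmh ξ η
  rw [mh_of_mem hij hξ.mem hη.mem, ht_of_mem hik hjk hξ.mem hη.mem, s.P_add,
    P_nabla_eq_self_of_geodesic hij hik hjk hξ hη hgeoξ,
    P_nabla_eq_self_of_geodesic hij.symm hjk hik hη hξ hgeoη] at h
  exact eq_neg_of_add_eq_zero_right ((smul_eq_zero.mp h).resolve_left (by norm_num))

lemma g_nabla_comm_of_mT {i j k : Fin 3} (hij : i ≠ j) (hik : i ≠ k) (hjk : j ≠ k)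
    (hmT : ∀ X Y, s.mT k i j X Y = 0) {X Y Z : V.VF} (hX : s.P i X = X) (hZ : s.P j Z = Z)
    (hY : s.P k Y = Y) : gm.g (gm.nabla Z X) Y = gm.g (gm.nabla X Z) Y := by
  have h := hmT X Z
  rw [mT_of_mem hij hX hZ, Tt_of_mem hik hjk hX hZ] at h
  have hP : s.P k (gm.nabla X Z - gm.nabla Z X) = 0 :=
    (smul_eq_zero.mp h).resolve_left (by norm_num)
  have hg := congrArg (gm.g · Y) hP
  simp only [s.P_selfadj, hY, gm.g_sub_left, gm.g_zero_left, sub_eq_zero] at hg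
  exact hg.symm

lemma g_Rc_eq_neg_three_mul_of_mh_of_mT {i j k : Fin 3} (hij : i ≠ j) (hik : i ≠ k)
    (hjk : j ≠ k) (hmh : ∀ X Y, s.mh k i j X Y = 0) (hmT : ∀ X Y, s.mT i j k X Y = 0)
    {ξ η : V.VF} (hξ : s.IsSpannedByUnit i ξ) (hη : s.IsSpannedByUnit j η)
    (hgeoξ : gm.nabla ξ ξ = 0) (hgeoη : gm.nabla η η = 0) :
    gm.g (gm.Rc ξ η η) ξ = -3 * gm.g (gm.nabla ξ η) (gm.nabla ξ η) :=
  gm.g_Rc_eq_neg_three_mul hgeoη (nabla_swap_eq_neg hij hik hjk hmh hξ hη hgeoξ hgeoη)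
    (gm.g_nabla_geodesic_eq_zero hgeoξ (g_eq_zero_of_mem hij.symm hη.mem hξ.mem))
    (g_nabla_comm_of_mT hjk hij.symm hik.symm hmT hη.mem
      (P_nabla_eq_self_of_geodesic hij hik hjk hξ hη hgeoξ) hξ.mem)

lemma g_nabla_mem_eq_zero {i j k : Fin 3} (hij : i ≠ j) (hik : i ≠ k) (hjk : j ≠ k)
    (hmT : ∀ X Y, s.mT j i k X Y = 0) {ξ η Z : V.VF} (hξ : s.P i ξ = ξ) (hη : s.P j η = η)
    (hZ : s.P k Z = Z) (hξη : gm.nabla ξ η = 0) : gm.g (gm.nabla Z η) ξ = 0 := by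
  have hξZ : gm.g (gm.nabla ξ Z) η = 0 := by
    rw [gm.g_nabla_eq_neg_of_orthogonal (g_eq_zero_of_mem hjk.symm hZ hη), hξη, gm.g_zero_right,
      neg_zero]
  have hZξ : gm.g (gm.nabla Z ξ) η = 0 :=
    (g_nabla_comm_of_mT hik hij hjk.symm hmT hξ hZ hη).trans hξZ
  rw [gm.g_nabla_eq_neg_of_orthogonal (g_eq_zero_of_mem hij.symm hη hξ), gm.g_symm η, hZξ,
    neg_zero]

lemma ht_P_P_eq_zero {i j k : Fin 3} (hij : i ≠ j) (hik : i ≠ k) (hjk : j ≠ k)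
    (hmTi : ∀ X Y, s.mT i j k X Y = 0) (hmTj : ∀ X Y, s.mT j i k X Y = 0) {ξ η : V.VF}
    (hξ : s.IsSpannedByUnit i ξ) (hη : s.IsSpannedByUnit j η) (hξη : gm.nabla ξ η = 0)
    (X Y : V.VF) : s.ht i (s.P j X) (s.P k Y) = 0 := by
  have hZ : s.P k (s.P k Y) = s.P k Y := s.P_idem k Y
  have hZη := g_nabla_mem_eq_zero hij hik hjk hmTj hξ.mem hη.mem hZ hξη
  have hηZ : gm.g (gm.nabla η (s.P k Y)) ξ = 0 :=
    (g_nabla_comm_of_mT hjk hij.symm hik.symm hmTi hη.mem hZ hξ.mem).symm.trans hZη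
  suffices hg : gm.g (gm.nabla (s.P j X) (s.P k Y) + gm.nabla (s.P k Y) (s.P j X)) ξ = 0 by
    rw [ht_of_mem hij.symm hik.symm (s.P_idem j X) hZ, hξ.P_eq_zero hg, smul_zero]
  rw [hη.2 X, gm.g_add_left, gm.nabla_fsmul_left, gm.g_fsmul_left, hηZ, gm.nabla_leibniz,
    gm.g_add_left, gm.g_fsmul_left, gm.g_fsmul_left, hZη,
    g_eq_zero_of_mem hij.symm hη.mem hξ.mem]
  simp only [mul_zero, add_zero]

lemma P_nabla_fsmul_eq_zero {k : Fin 3} {ξ η : V.VF} (hη : s.P k η = 0)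
    (hξη : gm.nabla ξ η = 0) (f f' : M → ℝ) :
    s.P k (gm.nabla (V.fsmul f ξ) (V.fsmul f' η)) = 0 := by
  rw [gm.nabla_fsmul_left, gm.nabla_leibniz, hξη, V.fsmul_zero_right, add_zero, s.P_fsmul,
    s.P_fsmul, hη, V.fsmul_zero_right, V.fsmul_zero_right]

lemma Tt_P_P_eq_zero {i j k : Fin 3} (hik : i ≠ k) (hjk : j ≠ k) {ξ η : V.VF}
    (hξ : s.IsSpannedByUnit i ξ) (hη : s.IsSpannedByUnit j η) (hξη : gm.nabla ξ η = 0)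
    (hηξ : gm.nabla η ξ = 0) (X Y : V.VF) : s.Tt k (s.P i X) (s.P j Y) = 0 := by
  rw [Tt_of_mem hik hjk (s.P_idem i X) (s.P_idem j Y), hξ.2 X, hη.2 Y, s.P_sub,
    P_nabla_fsmul_eq_zero (P_eq_zero_of_mem hjk.symm hη.mem) hξη,
    P_nabla_fsmul_eq_zero (P_eq_zero_of_mem hik.symm hξ.mem) hηξ, sub_zero, smul_zero]

end Split3

lemma Pkg.isSpannedByUnit_E {M : Type} {V : SmoothVF M} (p : Pkg V) (i : Fin 3)
    [Unique (p.ι i)] : p.sp.IsSpannedByUnit i (p.E i default) := by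
  refine ⟨?_, fun X => (p.E_span i X).trans (Fintype.sum_unique _)⟩
  rw [p.E_ortho]
  funext x
  simp

theorem closed_geodesic_mixed_dichotomy_general
    {M : Type} {V : SmoothVF M} (p : Pkg V)
    [hu0 : Unique (p.ι 0)] [hu1 : Unique (p.ι 1)]
    -- ξ₁ and ξ₂ are geodesic vector fields
    (hgeo1 : p.gm.nabla (p.E 0 default) (p.E 0 default) = 0)
    (hgeo2 : p.gm.nabla (p.E 1 default) (p.E 1 default) = 0)
    -- the pair (D₁,D₂) is mixed totally geodesic
    (h12 : ∀ X Y, p.sp.mh 2 0 1 X Y = 0)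
    -- the pairs (D₁,D₃) and (D₂,D₃) are mixed integrable
    (h13 : ∀ X Y, p.sp.mT 1 0 2 X Y = 0)
    (h23 : ∀ X Y, p.sp.mT 0 1 2 X Y = 0) :
    (∃ x : M,
        p.gm.g (p.gm.Rc (p.E 0 default) (p.E 1 default) (p.E 1 default)) (p.E 0 default) x < 0)
    ∨ (p.gm.g (p.gm.Rc (p.E 0 default) (p.E 1 default) (p.E 1 default)) (p.E 0 default) = 0
        ∧ (∀ X Y, p.sp.ht 0 (p.sp.P 1 X) (p.sp.P 2 Y) = 0)
        ∧ (∀ X Y, p.sp.ht 1 (p.sp.P 0 X) (p.sp.P 2 Y) = 0)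
        ∧ (∀ X Y, p.sp.Tt 2 (p.sp.P 0 X) (p.sp.P 1 Y) = 0)) := by
  have ne01 : (0 : Fin 3) ≠ 1 := by decide
  have ne02 : (0 : Fin 3) ≠ 2 := by decide
  have ne12 : (1 : Fin 3) ≠ 2 := by decide
  have hξ₁ := p.isSpannedByUnit_E 0
  have hξ₂ := p.isSpannedByUnit_E 1
  have hK := p.sp.g_Rc_eq_neg_three_mul_of_mh_of_mT ne01 ne02 ne12 h12 h23 hξ₁ hξ₂ hgeo1 hgeo2
  refine or_iff_not_imp_left.mpr fun hneg => ?_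
  simp only [not_exists, not_lt] at hneg
  have ha : p.gm.nabla (p.E 0 default) (p.E 1 default) = 0 :=
    p.gm.eq_zero_of_g_self_nonpos fun x => by
      have hx := hneg x
      rw [hK] at hx
      simp only [Pi.mul_apply, Pi.neg_apply, Pi.ofNat_apply] at hx
      linarith
  have hb : p.gm.nabla (p.E 1 default) (p.E 0 default) = 0 := by
    rw [Split3.nabla_swap_eq_neg ne01 ne02 ne12 h12 hξ₁ hξ₂ hgeo1 hgeo2, ha, neg_zero]
  exact ⟨by rw [hK, ha, p.gm.g_zero_left, mul_zero],
    Split3.ht_P_P_eq_zero ne01 ne02 ne12 h23 h13 hξ₁ hξ₂ ha,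
    Split3.ht_P_P_eq_zero ne01.symm ne12 ne02 h13 h23 hξ₂ hξ₁ hb,
    Split3.Tt_P_P_eq_zero ne02 ne12 hξ₁ hξ₂ ha hb⟩

/-- On a closed Riemannian manifold with two orthogonal unit
vector fields `ξ₁, ξ₂` spanning `D₁, D₂`, and `D₃ = D₁^⊥ ∩ D₂^⊥`: if `ξ₁, ξ₂` are
geodesic, the pair `(D₁,D₂)` is mixed totally geodesic, and the pairs `(D₁,D₃)` and
`(D₂,D₃)` are mixed integrable, then either `K(ξ₁,ξ₂) < 0` at some point, or
`K(ξ₁,ξ₂) ≡ 0` and `h̃₁|_{D₂×D₃} = h̃₂|_{D₁×D₃} = T̃₃|_{D₁×D₂} = 0` on `M`. -/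
theorem closed_geodesic_mixed_dichotomy
    {M : Type} {V : SmoothVF M} (p : Pkg V)
    [hu0 : Unique (p.ι 0)] [hu1 : Unique (p.ι 1)]
    (I : (M → ℝ) →ₗ[ℝ] ℝ)
    (hI_nonneg : ∀ f : M → ℝ, (∀ x, 0 ≤ f x) → 0 ≤ I f)
    (hI_definite : ∀ f : M → ℝ, (∀ x, 0 ≤ f x) → I f = 0 → f = 0)
    (hStokes : ∀ Y : V.VF, I (p.Div Y) = 0)
    -- ξ₁ and ξ₂ are geodesic vector fields
    (hgeo1 : p.gm.nabla (p.E 0 default) (p.E 0 default) = 0)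
    (hgeo2 : p.gm.nabla (p.E 1 default) (p.E 1 default) = 0)
    -- the pair (D₁,D₂) is mixed totally geodesic
    (h12 : ∀ X Y, p.sp.mh 2 0 1 X Y = 0)
    -- the pairs (D₁,D₃) and (D₂,D₃) are mixed integrable
    (h13 : ∀ X Y, p.sp.mT 1 0 2 X Y = 0)
    (h23 : ∀ X Y, p.sp.mT 0 1 2 X Y = 0) :
    (∃ x : M,
        p.gm.g (p.gm.Rc (p.E 0 default) (p.E 1 default) (p.E 1 default)) (p.E 0 default) x < 0)
    ∨ (p.gm.g (p.gm.Rc (p.E 0 default) (p.E 1 default) (p.E 1 default)) (p.E 0 default) = 0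
        ∧ (∀ X Y, p.sp.ht 0 (p.sp.P 1 X) (p.sp.P 2 Y) = 0)
        ∧ (∀ X Y, p.sp.ht 1 (p.sp.P 0 X) (p.sp.P 2 Y) = 0)
        ∧ (∀ X Y, p.sp.Tt 2 (p.sp.P 0 X) (p.sp.P 1 Y) = 0)) :=
  closed_geodesic_mixed_dichotomy_general p (hu0 := hu0) (hu1 := hu1) hgeo1 hgeo2 h12 h13 h23
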